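/- arXiv:1608.03419 — 5 statements merged into one kernel-verified Lean document; each statement's English description precedes it below -/
import Mathlib

section
/- For the 3-Kronecker quiver and dimension vector (d, d+1), the general cover-thin tree module counting formula (1/d)·∑_{i=1}^{m} C(m,i)·C(ne, d-1)·C(n(d-1), e-i)·(i/e) with m=3, n=2, e=d+1 simplifies to ct_{(d,d+1)} = (3/((d+2)(d+3)))·C(2d, d)·C(2(d+1), d+1). That is, for every positive integer d, (1/d)·∑_{i=1}^{3} C(3,i)·C(2(d+1), d-1)·C(2(d-1), d+1-i)·(i/(d+1)) = (3/((d+2)(d+3)))·C(2d,d)·C(2d+2, d+1). -/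
/-!
Since `i * C(3, i) = 3 * C(2, i - 1)`, the sum over `i` is three times the Vandermonde
convolution `∑ C(2, j) C(2d - 2, d - j) = C(2d, d)` (two Pascal steps). What remains is the
ratio `C(2d + 2, d - 1) / (d (d + 1)) = C(2d + 2, d + 1) / ((d + 2) (d + 3))`, two steps of
`C(n, k + 1) (k + 1) = C(n, k) (n - k)`.
-/

/-- Binomial coefficient with integer arguments, zero when `b < 0` or `b > a`. -/
noncomputable def intChoose (a b : ℤ) : ℚ :=
  if 0 ≤ b ∧ b ≤ a then ((a.toNat.choose b.toNat : ℕ) : ℚ) else 0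

theorem intChoose_natCast (n k : ℕ) : intChoose n k = n.choose k := by
  by_cases hk : k ≤ n
  · simp [intChoose, hk]
  · simp [intChoose, hk, Nat.choose_eq_zero_of_lt (not_le.mp hk)]

theorem intChoose_of_neg {n k : ℤ} (hk : k < 0) : intChoose n k = 0 := by
  simp [intChoose, not_le.mpr hk]

theorem intChoose_succ_left {n : ℤ} (hn : 0 ≤ n) (k : ℤ) :
    intChoose (n + 1) k = intChoose n (k - 1) + intChoose n k := by
  lift n to ℕ using hn
  rcases lt_or_ge k 0 with hk | hk
  · simp [intChoose_of_neg hk, intChoose_of_neg (show k - 1 < 0 by omega)]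
  lift k to ℕ using hk
  have hn1 : (n : ℤ) + 1 = (n + 1 : ℕ) := by push_cast; rfl
  rw [hn1]
  cases k with
  | zero =>
    have h0 : ∀ m : ℕ, intChoose m 0 = 1 := fun m => by simpa using intChoose_natCast m 0
    rw [Nat.cast_zero, zero_sub, intChoose_of_neg (k := -1) (by norm_num), h0, h0, zero_add]
  | succ j =>
    rw [show ((j + 1 : ℕ) : ℤ) - 1 = j by push_cast; ring, intChoose_natCast, intChoose_natCast,
      intChoose_natCast, Nat.choose_succ_succ, Nat.cast_add]

theorem intChoose_succ_right_eq {n k : ℤ} (hn : 0 ≤ n) (hk : 0 ≤ k) :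
    intChoose n (k + 1) * (k + 1) = intChoose n k * (n - k) := by
  lift n to ℕ using hn
  lift k to ℕ using hk
  rw [show (k : ℤ) + 1 = (k + 1 : ℕ) by push_cast; rfl, intChoose_natCast, intChoose_natCast]
  rcases le_or_gt k n with hkn | hkn
  · have h := congrArg (Nat.cast : ℕ → ℚ) (Nat.choose_succ_right_eq n k)
    push_cast [Nat.cast_sub hkn] at h
    push_cast
    exact h
  · simp [Nat.choose_eq_zero_of_lt hkn, Nat.choose_eq_zero_of_lt (Nat.lt_succ_of_lt hkn)]

theorem sum_Icc_intChoose_three_mul {n : ℤ} (hn : 0 ≤ n) (k : ℤ) :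
    ∑ i ∈ Finset.Icc (1 : ℤ) 3, intChoose 3 i * intChoose n (k + 1 - i) * i
      = 3 * intChoose (n + 2) k := by
  rw [show Finset.Icc (1 : ℤ) 3 = {1, 2, 3} by decide, Finset.sum_insert (by decide),
    Finset.sum_insert (by decide), Finset.sum_singleton, show n + 2 = n + 1 + 1 by ring,
    intChoose_succ_left (by omega), intChoose_succ_left hn, intChoose_succ_left hn]
  have h31 : intChoose 3 1 = 3 := by simp [intChoose]
  have h32 : intChoose 3 2 = 3 := by simp [intChoose]
  have h33 : intChoose 3 3 = 1 := by simp [intChoose]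
  rw [h31, h32, h33, show k + 1 - 1 = k by ring, show k + 1 - 2 = k - 1 by ring,
    show k + 1 - 3 = k - 1 - 1 by ring]
  push_cast
  ring

theorem intChoose_sub_one_mul_eq {n k : ℤ} (hn : 0 ≤ n) (hk : 1 ≤ k) :
    intChoose n (k - 1) * ((n - k + 1) * (n - k)) = intChoose n (k + 1) * ((k + 1) * k) := by
  have hsucc := intChoose_succ_right_eq hn (by omega : 0 ≤ k)
  have hpred := intChoose_succ_right_eq hn (by omega : 0 ≤ k - 1)
  rw [sub_add_cancel] at hpred
  push_cast at hpred
  linear_combination -(k : ℚ) * hsucc - ((n : ℚ) - k) * hpred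

/-- For the 3-Kronecker quiver and dimension vector `(d, d+1)` the general
cover-thin tree-module counting formula simplifies to
`ct_{(d,d+1)} = 3/((d+2)(d+3)) · C(2d,d) · C(2d+2,d+1)`. -/
theorem stmt0 (d : ℤ) (hd : 1 ≤ d) :
    (1 / (d : ℚ)) *
        ∑ i ∈ Finset.Icc (1 : ℤ) 3,
          intChoose 3 i * intChoose (2 * (d + 1)) (d - 1) *
            intChoose (2 * (d - 1)) (d + 1 - i) * ((i : ℚ) / ((d : ℚ) + 1))
      = (3 / (((d : ℚ) + 2) * ((d : ℚ) + 3))) *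
          intChoose (2 * d) d * intChoose (2 * d + 2) (d + 1) := by
  have hsum := sum_Icc_intChoose_three_mul (n := 2 * (d - 1)) (by omega) d
  have hratio := intChoose_sub_one_mul_eq (n := 2 * d + 2) (by omega) hd
  rw [show 2 * (d - 1) + 2 = 2 * d by ring] at hsum
  rw [show 2 * (d + 1) = 2 * d + 2 by ring]
  push_cast at hratio
  have hd0 : (d : ℚ) ≠ 0 := by positivity
  calc _ = intChoose (2 * d + 2) (d - 1) / (d * (d + 1)) *
        ∑ i ∈ Finset.Icc (1 : ℤ) 3, intChoose 3 i * intChoose (2 * (d - 1)) (d + 1 - i) * i := by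
        rw [Finset.mul_sum, Finset.mul_sum]
        refine Finset.sum_congr rfl fun i _ => ?_
        field_simp
    _ = _ := by
        rw [hsum]
        field_simp
        linear_combination intChoose (2 * d) d * hratio
end

section
/- For all integers d ≥ 1, the quantity (3/((d+2)(d+3)))·C(2d,d)·C(2d+2,d+1) is a positive integer. -/
/-!
Write `n = d + 1`, so the number is `3 · centralBinom d · centralBinom n / ((n + 1)(n + 2))`.
The factor `n + 1` divides `centralBinom n` (Catalan numbers are integers). For `n + 2`, the
relations `C(2n, k+1)(k+1) = C(2n, k)(2n - k)` at `k = n` and `k = n + 1`, read modulo `n + 2`,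
give `n + 2 ∣ 3 · C(2n, n+1)` and then `n + 2 ∣ 6 · centralBinom n`; the missing factor `2`
comes from `centralBinom d` being even. Since `n + 1` and `n + 2` are coprime, the product
divides, and the quotient is positive because central binomial coefficients are.
-/

open Nat

lemma add_two_dvd_three_mul_choose_succ (n : ℕ) : n + 2 ∣ 3 * (2 * n).choose (n + 1) := by
  have key : 3 * (2 * n).choose (n + 1) + (2 * n).choose (n + 2) * (n + 2)
      = (2 * n).choose (n + 1) * (n + 2) := by
    rw [choose_succ_right_eq]
    rcases n with _ | n
    · simp
    · rw [show 2 * (n + 1) - (n + 1 + 1) = n by omega]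
      ring
  exact (Nat.dvd_add_left (dvd_mul_left _ _)).mp (key ▸ dvd_mul_left _ _)

lemma add_two_dvd_six_mul_centralBinom (n : ℕ) : n + 2 ∣ 6 * centralBinom n := by
  have key : 6 * centralBinom n + (n + 1) * (3 * (2 * n).choose (n + 1))
      = 3 * centralBinom n * (n + 2) := by
    have h := choose_succ_right_eq (2 * n) n
    rw [show 2 * n - n = n by omega] at h
    rw [centralBinom]
    linear_combination 3 * h
  exact (Nat.dvd_add_left ((add_two_dvd_three_mul_choose_succ n).mul_left _)).mp
    (key ▸ dvd_mul_left _ _)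

lemma add_two_mul_add_three_dvd_three_mul_centralBinom_mul {d : ℕ} (hd : 1 ≤ d) :
    (d + 2) * (d + 3) ∣ 3 * centralBinom d * centralBinom (d + 1) := by
  have hcop : Coprime (d + 2) (d + 3) :=
    coprime_self_add_right.mpr (coprime_one_right _)
  obtain ⟨a, ha⟩ := two_dvd_centralBinom_of_one_le hd
  refine hcop.mul_dvd_of_dvd_of_dvd ((succ_dvd_centralBinom (d + 1)).mul_left _) ?_
  rw [ha, show 3 * (2 * a) * centralBinom (d + 1) = a * (6 * centralBinom (d + 1)) by ring]
  exact (add_two_dvd_six_mul_centralBinom (d + 1)).mul_left a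

/-- `(3/((d+2)(d+3))) · C(2d,d) · C(2d+2,d+1)` is a positive integer for every `d ≥ 1`. -/
theorem stmt1 (d : ℕ) (hd : 1 ≤ d) :
    ∃ k : ℕ, 0 < k ∧
      ((3 : ℚ) / (((d : ℚ) + 2) * ((d : ℚ) + 3))) *
          ((Nat.choose (2 * d) d : ℕ) : ℚ) * ((Nat.choose (2 * d + 2) (d + 1) : ℕ) : ℚ)
        = (k : ℚ) := by
  obtain ⟨k, hk⟩ := add_two_mul_add_three_dvd_three_mul_centralBinom_mul hd
  have hk_pos : 0 < k :=
    Nat.pos_of_ne_zero fun h => by simp [h, centralBinom_ne_zero] at hk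
  refine ⟨k, hk_pos, ?_⟩
  have hkℚ : (3 * centralBinom d * centralBinom (d + 1) : ℚ)
      = ((d : ℚ) + 2) * ((d : ℚ) + 3) * k := by
    exact_mod_cast hk
  rw [centralBinom, centralBinom, show 2 * (d + 1) = 2 * d + 2 by ring] at hkℚ
  field_simp
  linear_combination hkℚ
end

section
/- Let k, n be real numbers with 1 ≤ k < n. Then the limit as d → ∞ of (1/d)·ln( C(n k d, d)·C(n d, k d) ) equals n(k+1)·ln n + k(n-1)·ln k − (nk−1)·ln(nk−1) − (n−k)·ln(n−k), where the binomial-type expressions are interpreted via the Gamma function: C(x,y) = Γ(x+1)/(Γ(y+1)Γ(x−y+1)). -/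
/-!
Write `L x = log Γ(x + 1)`. Since `Γ` is increasing on `[2, ∞)`, `L x` lies between
`log ⌊x⌋!` and `log (⌊x⌋ + 1)!`, and Stirling's formula for factorials then gives
`L x = x log x - x + O(log x)`. Hence `L (a d) = a d log d + (a log a - a) d + o(d)` for every
`a > 0`. The logarithm in the theorem is a signed sum of six such terms, with
`a = nk, 1, nk - 1, n, k, n - k`; their signed sum vanishes, so the `d log d` terms cancel and
the limit is the signed sum of the `a log a - a`.
-/

open Real Filter

/-- Generalized binomial coefficient via the Gamma function:
`C(x,y) = Γ(x+1)/(Γ(y+1)Γ(x−y+1))`. -/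
noncomputable def gammaChoose (x y : ℝ) : ℝ :=
  Real.Gamma (x + 1) / (Real.Gamma (y + 1) * Real.Gamma (x - y + 1))

open scoped Nat

theorem Stirling.log_factorial_le_stirling {n : ℕ} (hn : n ≠ 0) :
    log n ! ≤ n * log n - n + log n / 2 + 1 := by
  obtain ⟨m, rfl⟩ := Nat.exists_eq_succ_of_ne_zero hn
  have hlog : log (stirlingSeq (m + 1)) ≤ log (exp 1 / √2) :=
    log_le_log (stirlingSeq'_pos m) (by simpa using stirlingSeq'_antitone (Nat.zero_le m))
  have hm : (0 : ℝ) < (m + 1 : ℕ) := by positivity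
  rw [log_stirlingSeq_formula, log_mul two_ne_zero hm.ne', log_div hm.ne' (exp_ne_zero 1),
    log_div (exp_ne_zero 1) (by positivity), log_exp, log_sqrt zero_le_two] at hlog
  linarith

theorem mul_log_sub_le {x y : ℝ} (hx : 0 < x) (hxy : x ≤ y) :
    (y * log y - y) - (x * log x - x) ≤ (y - x) * log y := by
  have hy : 0 < y := hx.trans_le hxy
  have h := log_le_sub_one_of_pos (div_pos hy hx)
  rw [log_div hy.ne' hx.ne', le_sub_iff_add_le, le_div_iff₀ hx] at h
  nlinarith

theorem abs_log_Gamma_add_one_sub_le {x : ℝ} (hx : 1 ≤ x) :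
    |log (Gamma (x + 1)) - (x * log x - x)| ≤ 2 * log x + 3 := by
  set m := ⌊x⌋₊
  have hm : 1 ≤ m := Nat.le_floor (by simpa using hx)
  have hm' : (1 : ℝ) ≤ m := by exact_mod_cast hm
  have hmx : (m : ℝ) ≤ x := Nat.floor_le (by linarith)
  have hxm : x < m + 1 := Nat.lt_floor_add_one x
  have hGamma_low : log m ! ≤ log (Gamma (x + 1)) := by
    rw [← Gamma_nat_eq_factorial]
    exact log_le_log (Gamma_pos_of_pos (by positivity)) <|
      Gamma_strictMonoOn_Ici.monotoneOn (by simp; linarith) (by simp; linarith) (by linarith)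
  have hGamma_up : log (Gamma (x + 1)) ≤ log (m + 1)! := by
    rw [← Gamma_nat_eq_factorial, Nat.cast_succ]
    exact log_le_log (Gamma_pos_of_pos (by positivity)) <|
      Gamma_strictMonoOn_Ici.monotoneOn (by simp; linarith) (by simp; linarith) (by linarith)
  have hfac_low := Stirling.le_log_factorial_stirling (n := m) (by omega)
  have hfac_up := Stirling.log_factorial_le_stirling (n := m + 1) (by omega)
  push_cast at hfac_up
  have hψ_low := mul_log_sub_le (by positivity) hmx
  have hψ_up := mul_log_sub_le (by positivity) hxm.le
  have hlog_m : log (m + 1) ≤ log x + 1 := by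
    calc log (m + 1) ≤ log (2 * x) := log_le_log (by positivity) (by linarith)
      _ ≤ log x + 1 := by rw [log_mul two_ne_zero (by positivity)]; linarith [log_two_lt_d9]
  have hlog_x : 0 ≤ log x := log_nonneg hx
  have hgap_low : (x - m) * log x ≤ log x := by nlinarith
  have hgap_up : (m + 1 - x) * log (m + 1) ≤ log (m + 1) := by
    nlinarith [log_nonneg (by linarith : (1 : ℝ) ≤ m + 1)]
  rw [abs_le]
  constructor
  · linarith [log_nonneg hm', log_nonneg (by linarith [pi_gt_three] : (1 : ℝ) ≤ 2 * π)]
  · linarith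

theorem tendsto_log_Gamma_add_one_sub_div :
    Tendsto (fun x => (log (Gamma (x + 1)) - (x * log x - x)) / x) atTop (nhds 0) := by
  have hbound : Tendsto (fun x => 2 * (log x / x) + 3 * x⁻¹) atTop (nhds 0) := by
    simpa using ((tendsto_pow_log_div_mul_add_atTop 1 0 1 one_ne_zero).const_mul 2).add
      (tendsto_inv_atTop_zero.const_mul 3)
  refine squeeze_zero_norm' ?_ hbound
  filter_upwards [eventually_ge_atTop 1] with x hx
  rw [norm_div, norm_of_nonneg (by linarith : 0 ≤ x), Real.norm_eq_abs]
  calc |log (Gamma (x + 1)) - (x * log x - x)| / x ≤ (2 * log x + 3) / x := by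
        gcongr; exact abs_log_Gamma_add_one_sub_le hx
    _ = _ := by ring

theorem tendsto_log_Gamma_mul_add_one {a : ℝ} (ha : 0 < a) :
    Tendsto (fun d : ℕ => (log (Gamma (a * d + 1)) - a * (d * log d)) / d) atTop
      (nhds (a * log a - a)) := by
  have had : Tendsto (fun d : ℕ => a * d) atTop atTop :=
    tendsto_natCast_atTop_atTop.const_mul_atTop ha
  have h := ((tendsto_log_Gamma_add_one_sub_div.comp had).const_mul a).add_const (a * log a - a)
  rw [mul_zero, zero_add] at h
  refine h.congr' ?_
  filter_upwards [eventually_gt_atTop 0] with d hd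
  have hd : (0 : ℝ) < d := by exact_mod_cast hd
  simp only [Function.comp_apply, log_mul ha.ne' hd.ne']
  field_simp
  ring

theorem gammaChoose_pos {x y : ℝ} (hy : 0 ≤ y) (hyx : y ≤ x) : 0 < gammaChoose x y := by
  unfold gammaChoose
  have := Gamma_pos_of_pos (by linarith : 0 < x + 1)
  have := Gamma_pos_of_pos (by linarith : 0 < y + 1)
  have := Gamma_pos_of_pos (by linarith : 0 < x - y + 1)
  positivity

theorem log_gammaChoose {x y : ℝ} (hy : 0 ≤ y) (hyx : y ≤ x) :
    log (gammaChoose x y) =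
      log (Gamma (x + 1)) - log (Gamma (y + 1)) - log (Gamma (x - y + 1)) := by
  have hpos : ∀ t : ℝ, 0 ≤ t → Gamma (t + 1) ≠ 0 :=
    fun t ht => (Gamma_pos_of_pos (by linarith)).ne'
  have hxy := sub_nonneg.2 hyx
  rw [gammaChoose, log_div (hpos x (hy.trans hyx)) (mul_ne_zero (hpos y hy) (hpos _ hxy)),
    log_mul (hpos y hy) (hpos _ hxy), sub_sub]

/-- Stirling-formula asymptotics of the cover-thin counting binomials along the
ray `(d, kd)` for the `(n+1)`-Kronecker quiver. -/
theorem stmt5 (k n : ℝ) (hk : 1 ≤ k) (hkn : k < n) :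
    Tendsto
      (fun d : ℕ =>
        (1 / (d : ℝ)) *
          Real.log (gammaChoose (n * k * d) (d : ℝ) * gammaChoose (n * d) (k * d)))
      atTop
      (nhds (n * (k + 1) * Real.log n + k * (n - 1) * Real.log k -
        (n * k - 1) * Real.log (n * k - 1) - (n - k) * Real.log (n - k))) := by
  have hk0 : 0 < k := by linarith
  have hn0 : 0 < n := by linarith
  have hnk1 : 0 < n * k - 1 := by nlinarith
  have hnk : 0 < n * k := by linarith
  have hnk' : 0 < n - k := by linarith
  have hlim := (((((tendsto_log_Gamma_mul_add_one hnk).sub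
    (tendsto_log_Gamma_mul_add_one one_pos)).sub (tendsto_log_Gamma_mul_add_one hnk1)).add
    (tendsto_log_Gamma_mul_add_one hn0)).sub (tendsto_log_Gamma_mul_add_one hk0)).sub
    (tendsto_log_Gamma_mul_add_one hnk')
  convert hlim.congr' ?_ using 2
  · rw [log_mul hn0.ne' hk0.ne', log_one]; ring
  filter_upwards [eventually_gt_atTop 0] with d hd
  have hd : (0 : ℝ) < d := by exact_mod_cast hd
  rw [log_mul (gammaChoose_pos hd.le (by nlinarith)).ne'
      (gammaChoose_pos (by positivity) (by nlinarith)).ne',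
    log_gammaChoose hd.le (by nlinarith), log_gammaChoose (by positivity) (by nlinarith),
    show n * k * d - d = (n * k - 1) * d by ring, show n * d - k * d = (n - k) * d by ring, one_mul]
  field_simp
  ring
end

section
/- Let k be a positive integer and n > k a positive integer. The function f(n,k) = n(k+1)·ln n + k(n−1)·ln k − (nk−1)·ln(nk−1) − (n−k)·ln(n−k) is strictly positive. -/
/-! Bounding `log (n k - 1)` by `log n + log k` and `log (n - k)` by `log n` cancels every
product term and leaves `(k + 1) log n - (k - 1) log k`, which is at least `2 log n > 0`. -/

open Real

namespace KroneckerGrowthRate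

noncomputable def growthRate (n k : ℝ) : ℝ :=
  n * (k + 1) * log n + k * (n - 1) * log k - (n * k - 1) * log (n * k - 1) -
    (n - k) * log (n - k)

variable {k n : ℝ}

lemma lt_growthRate (hk : 1 ≤ k) (hkn : k < n) :
    (k + 1) * log n - (k - 1) * log k < growthRate n k := by
  have hnk : 0 < n * k - 1 := by nlinarith
  have hlog_mul : log (n * k - 1) < log n + log k := by
    rw [← log_mul (by linarith) (by linarith)]
    exact log_lt_log hnk (by linarith)
  have hlog_sub : log (n - k) ≤ log n := log_le_log (by linarith) (by linarith)
  unfold growthRate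
  linarith [mul_lt_mul_of_pos_left hlog_mul hnk,
    mul_le_mul_of_nonneg_left hlog_sub (by linarith : 0 ≤ n - k)]

lemma two_mul_log_le (hk : 1 ≤ k) (hkn : k < n) :
    2 * log n ≤ (k + 1) * log n - (k - 1) * log k := by
  have := mul_le_mul_of_nonneg_left (log_le_log (by linarith) hkn.le) (by linarith : 0 ≤ k - 1)
  linarith

theorem growthRate_pos (hk : 1 ≤ k) (hkn : k < n) : 0 < growthRate n k := by
  have hlog : 0 < log n := log_pos (by linarith)
  linarith [lt_growthRate hk hkn, two_mul_log_le hk hkn]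

end KroneckerGrowthRate

/-- Positivity of the asymptotic exponential growth rate
`f(n,k) = n(k+1)·ln n + k(n−1)·ln k − (nk−1)·ln(nk−1) − (n−k)·ln(n−k)`. -/
theorem stmt6 (k n : ℕ) (hk : 1 ≤ k) (hkn : k < n) :
    0 < (n : ℝ) * ((k : ℝ) + 1) * Real.log (n : ℝ) +
          (k : ℝ) * ((n : ℝ) - 1) * Real.log (k : ℝ) -
          ((n : ℝ) * (k : ℝ) - 1) * Real.log ((n : ℝ) * (k : ℝ) - 1) -
          ((n : ℝ) - (k : ℝ)) * Real.log ((n : ℝ) - (k : ℝ)) :=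
  KroneckerGrowthRate.growthRate_pos (by exact_mod_cast hk) (by exact_mod_cast hkn)
end

section
/- Let G be a finite (multi)graph with vertex set V, |V| = v. Consider the quiver Γ obtained by orienting the edges of G arbitrarily, and the dimension vector α with α_i = 1 for all vertices i. Then the number of spanning trees of G equals the number of equivalence classes of dimension vectors β on the universal abelian covering quiver Γ̂ that are compatible with α, have connected support, and take values in {0,1}, such that the support of β is a tree with v vertices. -/
variable (Γ₀ Γ₁ : Type*) [Fintype Γ₀] [DecidableEq Γ₀] [Fintype Γ₁] [DecidableEq Γ₁]
  (s t : Γ₁ → Γ₀)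

/-- Adjacency (in either direction) in the universal abelian covering quiver `Γ̂`:
for each arrow `a : i → j` of `Γ` and `χ ∈ ℤ^{Γ₁}` there is an arrow
`(i,χ) → (j, χ + e_a)`. -/
def coverAdj (p q : Γ₀ × (Γ₁ → ℤ)) : Prop :=
  ∃ (a : Γ₁) (χ : Γ₁ → ℤ),
    (p = (s a, χ) ∧ q = (t a, χ + Pi.single a 1)) ∨
    (q = (s a, χ) ∧ p = (t a, χ + Pi.single a 1))

/-- A `{0,1}`-valued dimension vector of `Γ̂`, compatible with the all-ones dimension
vector of `Γ`, whose support is a connected tree with `|Γ₀|` vertices. -/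
def GoodBeta (β : (Γ₀ × (Γ₁ → ℤ)) →₀ ℕ) : Prop :=
  (∀ p, β p ≤ 1) ∧
  (∀ i : Γ₀, (β.sum fun p n => if p.1 = i then n else 0) = 1) ∧
  β.support.card = Fintype.card Γ₀ ∧
  {pa : Γ₁ × (Γ₁ → ℤ) | (s pa.1, pa.2) ∈ β.support ∧
      (t pa.1, pa.2 + Pi.single pa.1 1) ∈ β.support}.ncard = Fintype.card Γ₀ - 1 ∧
  ∀ p ∈ β.support, ∀ q ∈ β.support,
    Relation.EqvGen
      (fun x y => x ∈ β.support ∧ y ∈ β.support ∧ coverAdj Γ₀ Γ₁ s t x y) p q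

/-- A spanning tree of the underlying (multi)graph of `Γ`: a set of `|Γ₀| - 1` edges
connecting all vertices. -/
def SpanningTree (E : Finset Γ₁) : Prop :=
  E.card = Fintype.card Γ₀ - 1 ∧
  ∀ i j : Γ₀, Relation.EqvGen (fun x y => ∃ a ∈ E, s a = x ∧ t a = y) i j

/-- Equivalence of dimension vectors of `Γ̂`: translation by `ξ ∈ ℤ^{Γ₁}`. -/
def coverSetoid : Setoid {β : (Γ₀ × (Γ₁ → ℤ)) →₀ ℕ // GoodBeta Γ₀ Γ₁ s t β} where
  r β β' := ∃ ξ : Γ₁ → ℤ, ∀ p : Γ₀ × (Γ₁ → ℤ),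
    (β' : (Γ₀ × (Γ₁ → ℤ)) →₀ ℕ) p = (β : (Γ₀ × (Γ₁ → ℤ)) →₀ ℕ) (p.1, p.2 + ξ)
  iseqv := by
    constructor
    · intro β; exact ⟨0, fun p => by simp⟩
    · rintro β β' ⟨ξ, h⟩
      exact ⟨-ξ, fun p => by rw [h (p.1, p.2 + -ξ)]; simp⟩
    · rintro β β' β'' ⟨ξ, h⟩ ⟨ξ', h'⟩
      refine ⟨ξ + ξ', fun p => ?_⟩
      rw [h' p, h (p.1, p.2 + ξ')]
      have e : p.2 + ξ' + ξ = p.2 + (ξ + ξ') := by abel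
      rw [e]

/-!
A `{0,1}`-valued `β` compatible with the all-ones vector is the indicator of the graph
`{(i, f i)}` of a function `f : Γ₀ → ℤ^{Γ₁}`, translation of `β` is translation of `f`, and the
arrows of `Γ̂` inside the support of `β` lie exactly over the arrows `a` with
`f (t a) = f (s a) + e_a`. So `β` is good iff these arrows form a spanning tree `E`, and then `f`
is a potential for `E`, unique up to a constant since `E` is connected. Conversely a spanning tree
`E` has a potential whose coordinates along arrows outside `E` vanish, so that no other arrow
satisfies the equation: grow a subtree of `E` one crossing arrow at a time, giving the new vertex
the potential of its neighbour shifted by `± e_a`; counting shows that the subtree ends up being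
all of `E`.
-/

open Finset Function Relation

namespace Relation.EqvGen

variable {α β : Type*} {r : α → α → Prop} {a b : α}

theorem lift' {p : β → β → Prop} (g : α → β) (h : ∀ x y, r x y → EqvGen p (g x) (g y))
    (hab : EqvGen r a b) : EqvGen p (g a) (g b) :=
  Setoid.eqvGen_le (s := (EqvGen.setoid p).comap g) h hab

theorem apply_eq_apply (g : α → β) (h : ∀ x y, r x y → g x = g y) (hab : EqvGen r a b) :
    g a = g b :=
  Setoid.eqvGen_le (s := Setoid.ker g) h hab

end Relation.EqvGen

section Potentials

variable {Γ₀ Γ₁ : Type*} {s t : Γ₁ → Γ₀}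

def edgeRel (s t : Γ₁ → Γ₀) (E : Finset Γ₁) (x y : Γ₀) : Prop :=
  ∃ a ∈ E, s a = x ∧ t a = y

theorem exists_crossing_edge {E : Finset Γ₁} {T : Finset Γ₀} {i j : Γ₀}
    (h : EqvGen (edgeRel s t E) i j) (hi : i ∈ T) (hj : j ∉ T) :
    ∃ a ∈ E, (s a ∈ T ∧ t a ∉ T) ∨ (t a ∈ T ∧ s a ∉ T) := by
  by_contra! hE
  have hT : (i ∈ T) = (j ∈ T) := h.apply_eq_apply (· ∈ T) fun x y ⟨a, ha, hx, hy⟩ => by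
    subst hx hy; exact propext ⟨(hE a ha).1, (hE a ha).2⟩
  exact hj (hT ▸ hi)

variable [DecidableEq Γ₁]

theorem exists_eq_sub_of_potential {E : Finset Γ₁}
    (hconn : ∀ i j, EqvGen (edgeRel s t E) i j) {f g : Γ₀ → Γ₁ → ℤ}
    (hf : ∀ a ∈ E, f (t a) = f (s a) + Pi.single a 1)
    (hg : ∀ a ∈ E, g (t a) = g (s a) + Pi.single a 1) :
    ∃ ξ : Γ₁ → ℤ, ∀ i, g i = f i - ξ := by
  rcases isEmpty_or_nonempty Γ₀ with _ | ⟨⟨i₀⟩⟩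
  · exact ⟨0, isEmptyElim⟩
  refine ⟨f i₀ - g i₀, fun i => ?_⟩
  have h := (hconn i i₀).apply_eq_apply (fun i => f i - g i) fun x y ⟨a, ha, hx, hy⟩ => by
    subst hx hy; rw [hf a ha, hg a ha]; abel
  rw [← h]; abel

/-- The invariant of the greedy construction of a potential for a spanning tree `E`, grown
from a single vertex to the vertex set `T`. -/
structure PartialPotential (s t : Γ₁ → Γ₀) (E : Finset Γ₁) (T : Finset Γ₀) (S : Finset Γ₁)
    (f : Γ₀ → Γ₁ → ℤ) : Prop where
  subset : S ⊆ E
  card_add_one : S.card + 1 = T.card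
  mem_of_mem : ∀ a ∈ S, s a ∈ T ∧ t a ∈ T
  potential : ∀ a ∈ S, f (t a) = f (s a) + Pi.single a 1
  apply_eq_zero : ∀ a ∉ S, ∀ i, f i a = 0

namespace PartialPotential

variable [DecidableEq Γ₀] {E S : Finset Γ₁} {T : Finset Γ₀} {f : Γ₀ → Γ₁ → ℤ}

theorem extend (h : PartialPotential s t E T S f) {a : Γ₁} (ha : a ∈ E) (haS : a ∉ S)
    {v : Γ₀} (hv : v ∉ T) (hs : s a ∈ insert v T) (ht : t a ∈ insert v T) {w : Γ₁ → ℤ}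
    (hw : ∀ b ∉ S, b ≠ a → w b = 0)
    (hpot : update f v w (t a) = update f v w (s a) + Pi.single a 1) :
    PartialPotential s t E (insert v T) (insert a S) (update f v w) where
  subset := insert_subset ha h.subset
  card_add_one := by rw [card_insert_of_notMem haS, card_insert_of_notMem hv, h.card_add_one]
  mem_of_mem b hb := by
    rcases mem_insert.1 hb with rfl | hb
    · exact ⟨hs, ht⟩
    · exact ⟨mem_insert_of_mem (h.mem_of_mem b hb).1, mem_insert_of_mem (h.mem_of_mem b hb).2⟩
  potential b hb := by
    rcases mem_insert.1 hb with rfl | hb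
    · exact hpot
    have hsv : s b ≠ v := fun e => hv (e ▸ (h.mem_of_mem b hb).1)
    have htv : t b ≠ v := fun e => hv (e ▸ (h.mem_of_mem b hb).2)
    rw [update_of_ne hsv, update_of_ne htv, h.potential b hb]
  apply_eq_zero b hb i := by
    rw [mem_insert, not_or] at hb
    rcases eq_or_ne i v with rfl | hi
    · rw [update_self, hw b hb.2 hb.1]
    · rw [update_of_ne hi, h.apply_eq_zero b hb.2]

theorem exists_insert (h : PartialPotential s t E T S f)
    (hconn : ∀ i j, EqvGen (edgeRel s t E) i j) (hT : T.Nonempty) (hTc : ∃ j, j ∉ T) :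
    ∃ v ∉ T, ∃ S' f', PartialPotential s t E (insert v T) S' f' := by
  obtain ⟨i, hi⟩ := hT
  obtain ⟨j, hj⟩ := hTc
  have hw (u : Γ₀) (c : ℤ) (a : Γ₁) : ∀ b ∉ S, b ≠ a → (f u + c • Pi.single a 1 : Γ₁ → ℤ) b = 0 :=
    fun b hb hba => by simp [h.apply_eq_zero b hb, Pi.single_eq_of_ne hba]
  obtain ⟨a, ha, ⟨hs, ht⟩ | ⟨ht, hs⟩⟩ := exists_crossing_edge (hconn i j) hi hj
  · have hne : s a ≠ t a := fun e => ht (e ▸ hs)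
    refine ⟨t a, ht, _, _, h.extend ha (fun haS => ht (h.mem_of_mem a haS).2) ht
      (mem_insert_of_mem hs) (mem_insert_self _ _) (hw (s a) 1 a) ?_⟩
    simp [update_of_ne hne]
  · have hne : t a ≠ s a := fun e => hs (e ▸ ht)
    refine ⟨s a, hs, _, _, h.extend ha (fun haS => hs (h.mem_of_mem a haS).1) hs
      (mem_insert_self _ _) (mem_insert_of_mem ht) (hw (t a) (-1) a) ?_⟩
    simp [update_of_ne hne]

variable [Fintype Γ₀]

theorem exists_of_lt_card (hconn : ∀ i j, EqvGen (edgeRel s t E) i j) :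
    ∀ k < Fintype.card Γ₀, ∃ T S f, T.card = k + 1 ∧ PartialPotential s t E T S f
  | 0, hk => by
    obtain ⟨i₀⟩ := Fintype.card_pos_iff.1 hk
    exact ⟨{i₀}, ∅, 0, rfl, ⟨empty_subset _, rfl, by simp, by simp, by simp⟩⟩
  | k + 1, hk => by
    obtain ⟨T, S, f, hTk, h⟩ := exists_of_lt_card hconn k (by omega)
    have hTc : ∃ j, j ∉ T := by
      by_contra! hT
      have := card_le_card (fun j _ => hT j : (univ : Finset Γ₀) ⊆ T)
      rw [card_univ] at this
      omega
    obtain ⟨v, hv, S', f', h'⟩ := h.exists_insert hconn (card_pos.1 (by omega)) hTc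
    exact ⟨_, S', f', by rw [card_insert_of_notMem hv, hTk], h'⟩

end PartialPotential

theorem SpanningTree.exists_potential [Fintype Γ₀] [DecidableEq Γ₀] {E : Finset Γ₁}
    (hE : SpanningTree Γ₀ Γ₁ s t E) :
    ∃ f : Γ₀ → Γ₁ → ℤ, ∀ a, a ∈ E ↔ f (t a) = f (s a) + Pi.single a 1 := by
  rcases isEmpty_or_nonempty Γ₀ with _ | _
  · exact ⟨0, fun a => isEmptyElim (s a)⟩
  obtain ⟨T, S, f, hT, h⟩ :=
    PartialPotential.exists_of_lt_card hE.2 (Fintype.card Γ₀ - 1) (by simp [Fintype.card_pos])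
  have hcard := h.card_add_one
  obtain rfl : S = E := eq_of_subset_of_card_le h.subset (by rw [hE.1]; omega)
  refine ⟨f, fun a => ⟨h.potential a, fun hpot => by_contra fun haS => ?_⟩⟩
  simpa [h.apply_eq_zero a haS] using congrFun hpot a

end Potentials

section Cover

variable {Γ₀ Γ₁ : Type*} [Fintype Γ₁] {s t : Γ₁ → Γ₀}

variable (s t) in
noncomputable def treeEdges [DecidableEq Γ₁] (β : (Γ₀ × (Γ₁ → ℤ)) →₀ ℕ) : Finset Γ₁ :=
  open Classical in {a | ∃ χ, (s a, χ) ∈ β.support ∧ (t a, χ + Pi.single a 1) ∈ β.support}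

theorem mem_treeEdges [DecidableEq Γ₁] {β : (Γ₀ × (Γ₁ → ℤ)) →₀ ℕ} {a : Γ₁} :
    a ∈ treeEdges s t β ↔
      ∃ χ, (s a, χ) ∈ β.support ∧ (t a, χ + Pi.single a 1) ∈ β.support := by
  simp [treeEdges]

variable [Fintype Γ₀] [DecidableEq Γ₀]

noncomputable def graphBeta (f : Γ₀ → Γ₁ → ℤ) : (Γ₀ × (Γ₁ → ℤ)) →₀ ℕ :=
  Finsupp.onFinset (univ.image fun i => (i, f i)) (fun p => if p.2 = f p.1 then 1 else 0)
    fun p hp => mem_image.2 ⟨p.1, mem_univ _, Prod.ext rfl (by simpa using hp : p.2 = f p.1).symm⟩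

@[simp]
theorem graphBeta_apply (f : Γ₀ → Γ₁ → ℤ) (p : Γ₀ × (Γ₁ → ℤ)) :
    graphBeta f p = if p.2 = f p.1 then 1 else 0 := rfl

theorem mem_support_graphBeta {f : Γ₀ → Γ₁ → ℤ} {p : Γ₀ × (Γ₁ → ℤ)} :
    p ∈ (graphBeta f).support ↔ p.2 = f p.1 := by
  simp [Finsupp.mem_support_iff]

theorem support_graphBeta (f : Γ₀ → Γ₁ → ℤ) :
    (graphBeta f).support = univ.image fun i => (i, f i) := by
  ext ⟨i, χ⟩
  simp [eq_comm]

theorem graphBeta_sub (f : Γ₀ → Γ₁ → ℤ) (ξ : Γ₁ → ℤ) (p : Γ₀ × (Γ₁ → ℤ)) :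
    graphBeta (fun i => f i - ξ) p = graphBeta f (p.1, p.2 + ξ) := by
  simp [eq_sub_iff_add_eq]

theorem eq_graphBeta_of_support {β : (Γ₀ × (Γ₁ → ℤ)) →₀ ℕ} (hle : ∀ p, β p ≤ 1)
    {f : Γ₀ → Γ₁ → ℤ} (hf : ∀ p, p ∈ β.support ↔ p.2 = f p.1) : β = graphBeta f := by
  ext p
  by_cases hp : p.2 = f p.1
  · have := Finsupp.mem_support_iff.1 ((hf p).2 hp)
    have := hle p
    rw [graphBeta_apply, if_pos hp]
    omega
  · rw [graphBeta_apply, if_neg hp, ← Finsupp.notMem_support_iff, hf]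
    exact hp

variable [DecidableEq Γ₁]

theorem mem_treeEdges_graphBeta {f : Γ₀ → Γ₁ → ℤ} {a : Γ₁} :
    a ∈ treeEdges s t (graphBeta f) ↔ f (t a) = f (s a) + Pi.single a 1 := by
  simp [mem_treeEdges, eq_comm]

theorem treeEdges_graphBeta_sub (f : Γ₀ → Γ₁ → ℤ) (ξ : Γ₁ → ℤ) :
    treeEdges s t (graphBeta fun i => f i - ξ) = treeEdges s t (graphBeta f) := by
  ext a
  rw [mem_treeEdges_graphBeta, mem_treeEdges_graphBeta, sub_add_eq_add_sub, sub_left_inj]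

theorem ncard_liftedEdges_graphBeta (f : Γ₀ → Γ₁ → ℤ) :
    {pa : Γ₁ × (Γ₁ → ℤ) | (s pa.1, pa.2) ∈ (graphBeta f).support ∧
      (t pa.1, pa.2 + Pi.single pa.1 1) ∈ (graphBeta f).support}.ncard =
      (treeEdges s t (graphBeta f)).card := by
  have : {pa : Γ₁ × (Γ₁ → ℤ) | (s pa.1, pa.2) ∈ (graphBeta f).support ∧
      (t pa.1, pa.2 + Pi.single pa.1 1) ∈ (graphBeta f).support} =
      (fun a => (a, f (s a))) '' (treeEdges s t (graphBeta f) : Set Γ₁) := by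
    ext ⟨a, χ⟩
    simp only [Set.mem_ofPred_eq, mem_support_graphBeta, Set.mem_image, mem_coe,
      mem_treeEdges_graphBeta, Prod.mk.injEq]
    constructor
    · rintro ⟨rfl, h⟩
      exact ⟨a, h.symm, rfl, rfl⟩
    · rintro ⟨a, h, rfl, rfl⟩
      exact ⟨rfl, h.symm⟩
  rw [this, Set.ncard_image_of_injective _ fun a b hab => congrArg Prod.fst hab,
    Set.ncard_coe_finset]

theorem connected_support_graphBeta_iff {f : Γ₀ → Γ₁ → ℤ} :
    (∀ p ∈ (graphBeta f).support, ∀ q ∈ (graphBeta f).support,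
      EqvGen (fun x y => x ∈ (graphBeta f).support ∧ y ∈ (graphBeta f).support ∧
        coverAdj Γ₀ Γ₁ s t x y) p q) ↔
      ∀ i j, EqvGen (edgeRel s t (treeEdges s t (graphBeta f))) i j := by
  constructor
  · intro h i j
    refine (h (i, f i) (by simp) (j, f j) (by simp)).lift' Prod.fst ?_
    rintro x y ⟨hx, hy, a, χ, ⟨rfl, rfl⟩ | ⟨rfl, rfl⟩⟩
    · exact .rel _ _ ⟨a, mem_treeEdges.2 ⟨χ, hx, hy⟩, rfl, rfl⟩
    · exact .symm _ _ (.rel _ _ ⟨a, mem_treeEdges.2 ⟨χ, hy, hx⟩, rfl, rfl⟩)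
  · intro h p hp q hq
    rw [mem_support_graphBeta] at hp hq
    rw [← Prod.mk.eta (p := p), ← Prod.mk.eta (p := q), hp, hq]
    refine (h p.1 q.1).lift' (fun i => (i, f i)) ?_
    rintro _ _ ⟨a, ha, rfl, rfl⟩
    refine .rel _ _ ⟨by simp, by simp, a, f (s a), .inl ⟨rfl, ?_⟩⟩
    rw [mem_treeEdges_graphBeta.1 ha]

theorem goodBeta_graphBeta_iff {f : Γ₀ → Γ₁ → ℤ} :
    GoodBeta Γ₀ Γ₁ s t (graphBeta f) ↔ SpanningTree Γ₀ Γ₁ s t (treeEdges s t (graphBeta f)) := by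
  have hle (p : Γ₀ × (Γ₁ → ℤ)) : graphBeta f p ≤ 1 := by
    rw [graphBeta_apply]
    split_ifs <;> simp
  have hfiber (i : Γ₀) : ((graphBeta f).sum fun p n => if p.1 = i then n else 0) = 1 := by
    rw [Finsupp.sum, support_graphBeta, sum_image fun x _ y _ h => congrArg Prod.fst h]
    simp
  have hcard : (graphBeta f).support.card = Fintype.card Γ₀ := by
    rw [support_graphBeta, card_image_of_injective _ fun x y h => congrArg Prod.fst h, card_univ]
  simp only [GoodBeta, SpanningTree, ncard_liftedEdges_graphBeta, connected_support_graphBeta_iff,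
    hle, hfiber, hcard, implies_true, true_and]
  exact Iff.rfl

theorem GoodBeta.exists_eq_graphBeta {β : (Γ₀ × (Γ₁ → ℤ)) →₀ ℕ}
    (hβ : GoodBeta Γ₀ Γ₁ s t β) : ∃ f : Γ₀ → Γ₁ → ℤ, β = graphBeta f := by
  obtain ⟨hle, hfiber, -⟩ := hβ
  have hone (p) (hp : p ∈ β.support) : β p = 1 :=
    le_antisymm (hle p) (Nat.one_le_iff_ne_zero.2 (Finsupp.mem_support_iff.1 hp))
  have hsingle (i : Γ₀) : ∃ χ, {p ∈ β.support | p.1 = i} = {(i, χ)} := by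
    have hcard := hfiber i
    rw [Finsupp.sum, ← sum_filter, sum_congr rfl fun p hp => hone p (mem_filter.1 hp).1,
      sum_const, smul_eq_mul, mul_one] at hcard
    obtain ⟨x, hx⟩ := card_eq_one.1 hcard
    have hxi : x ∈ {p ∈ β.support | p.1 = i} := by rw [hx]; exact mem_singleton_self x
    obtain rfl : x.1 = i := (mem_filter.1 hxi).2
    exact ⟨x.2, hx⟩
  choose f hf using hsingle
  refine ⟨f, eq_graphBeta_of_support hle fun p => ?_⟩
  calc p ∈ β.support ↔ p ∈ {q ∈ β.support | q.1 = p.1} := by simp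
    _ ↔ p.2 = f p.1 := by simp [hf, Prod.ext_iff]

theorem GoodBeta.spanningTree_treeEdges {β : (Γ₀ × (Γ₁ → ℤ)) →₀ ℕ}
    (hβ : GoodBeta Γ₀ Γ₁ s t β) : SpanningTree Γ₀ Γ₁ s t (treeEdges s t β) := by
  obtain ⟨f, rfl⟩ := hβ.exists_eq_graphBeta
  exact goodBeta_graphBeta_iff.1 hβ

theorem GoodBeta.treeEdges_eq_of_translate {β β' : (Γ₀ × (Γ₁ → ℤ)) →₀ ℕ}
    (hβ : GoodBeta Γ₀ Γ₁ s t β) {ξ : Γ₁ → ℤ} (h : ∀ p, β' p = β (p.1, p.2 + ξ)) :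
    treeEdges s t β' = treeEdges s t β := by
  obtain ⟨f, rfl⟩ := hβ.exists_eq_graphBeta
  obtain rfl : β' = graphBeta fun i => f i - ξ := Finsupp.ext fun p => by rw [h, graphBeta_sub]
  exact treeEdges_graphBeta_sub f ξ

theorem GoodBeta.exists_translate_of_treeEdges_eq {β β' : (Γ₀ × (Γ₁ → ℤ)) →₀ ℕ}
    (hβ : GoodBeta Γ₀ Γ₁ s t β) (hβ' : GoodBeta Γ₀ Γ₁ s t β')
    (h : treeEdges s t β = treeEdges s t β') :
    ∃ ξ : Γ₁ → ℤ, ∀ p, β' p = β (p.1, p.2 + ξ) := by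
  obtain ⟨f, rfl⟩ := hβ.exists_eq_graphBeta
  obtain ⟨g, rfl⟩ := hβ'.exists_eq_graphBeta
  obtain ⟨ξ, hξ⟩ := exists_eq_sub_of_potential (goodBeta_graphBeta_iff.1 hβ).2
    (fun a ha => mem_treeEdges_graphBeta.1 ha) (fun a ha => mem_treeEdges_graphBeta.1 (h ▸ ha))
  obtain rfl : g = fun i => f i - ξ := funext hξ
  exact ⟨ξ, graphBeta_sub f ξ⟩

end Cover

/-- The number of spanning trees of the underlying graph equals the number of
equivalence classes of `{0,1}`-valued dimension vectors on the universal abelian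
covering quiver compatible with the all-ones dimension vector whose support is a
tree with `|Γ₀|` vertices. -/
theorem stmt9 :
    Nonempty ({E : Finset Γ₁ // SpanningTree Γ₀ Γ₁ s t E} ≃
      Quotient (coverSetoid Γ₀ Γ₁ s t)) := by
  let Φ : Quotient (coverSetoid Γ₀ Γ₁ s t) → {E : Finset Γ₁ // SpanningTree Γ₀ Γ₁ s t E} :=
    Quotient.lift (fun β => ⟨treeEdges s t β.1, β.2.spanningTree_treeEdges⟩)
      fun β _ ⟨_, hξ⟩ => Subtype.ext (β.2.treeEdges_eq_of_translate hξ).symm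
  refine ⟨(Equiv.ofBijective Φ ⟨?_, ?_⟩).symm⟩
  · rintro ⟨β⟩ ⟨β'⟩ h
    exact Quotient.sound (β.2.exists_translate_of_treeEdges_eq β'.2 (congrArg Subtype.val h))
  · rintro ⟨E, hE⟩
    obtain ⟨f, hf⟩ := hE.exists_potential
    have hEf : treeEdges s t (graphBeta f) = E := by
      ext a
      rw [mem_treeEdges_graphBeta, hf]
    exact ⟨Quotient.mk _ ⟨graphBeta f, goodBeta_graphBeta_iff.2 (hEf ▸ hE)⟩, Subtype.ext hEf⟩
end
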